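/- arXiv:astro-ph/0304557 — 3 statements merged into one kernel-verified Lean document; each statement's English description precedes it below -/
import Mathlib

section
/- (Theorem 1, first part — algebraic core.) Let n, t, e_φ be vectors in ℝ³ with ‖e_φ‖ = 1, n · e_φ = 0 and t = n × e_φ. Let B, B̂ ∈ ℝ³ and χ, w, v̂_φ ∈ ℝ. Suppose the pre-shock velocity is v = χ • B + w • e_φ, the post-shock velocity is v̂ = v̂_φ • e_φ, the tangential electric-field jump condition (v × B) · t = (v̂ × B̂) · t holds, and the normal field component is continuous and nonzero: B · n = B̂ · n and B · n ≠ 0. Then v̂_φ = w; i.e., the rotational speed of the disk material adjacent to the shock equals the co-rotation speed w = ω r sinθ of the field line through that point. -/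
open Matrix InnerProductSpace

/-!
By the Binet–Cauchy identity, `(e × b) · (n × e) = -(b · n)` for a unit vector `e` orthogonal to
`n`. The field-aligned part `χ B` of `v` drops out of `v × B`, so the jump condition reads
`w (B · n) = v̂_φ (B̂ · n)`, and continuity of the nonzero normal component `B · n` gives `v̂_φ = w`.
-/

noncomputable def cross3 (x y : EuclideanSpace ℝ (Fin 3)) : EuclideanSpace ℝ (Fin 3) :=
  WithLp.toLp 2 (crossProduct x y)

theorem inner_cross3_cross3 (a b c d : EuclideanSpace ℝ (Fin 3)) :
    ⟪cross3 a b, cross3 c d⟫_ℝ = ⟪a, c⟫_ℝ * ⟪b, d⟫_ℝ - ⟪a, d⟫_ℝ * ⟪b, c⟫_ℝ := by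
  simp only [cross3, EuclideanSpace.inner_eq_star_dotProduct,
    star_trivial, cross_dot_cross, dotProduct_comm]

theorem cross3_smul_left (r : ℝ) (a b : EuclideanSpace ℝ (Fin 3)) :
    cross3 (r • a) b = r • cross3 a b := by
  simp [cross3]

theorem cross3_smul_add_smul_self (c r : ℝ) (a b : EuclideanSpace ℝ (Fin 3)) :
    cross3 (c • b + r • a) b = r • cross3 a b := by
  simp [cross3, cross_self]

theorem inner_cross3_cross3_of_unit_of_orthogonal {e n : EuclideanSpace ℝ (Fin 3)}
    (he : ‖e‖ = 1) (hne : ⟪n, e⟫_ℝ = 0) (b : EuclideanSpace ℝ (Fin 3)) :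
    ⟪cross3 e b, cross3 n e⟫_ℝ = -⟪b, n⟫_ℝ := by
  rw [inner_cross3_cross3, real_inner_comm n e, hne, real_inner_self_eq_norm_sq, he]
  ring

/-- Theorem 1 (first part, algebraic core): at a point of the shock boundary of a
disk region with no meridional motion, the tangential electric-field jump condition
together with continuity of the nonzero normal magnetic field component forces the
disk rotational speed `v̂_φ` to equal the co-rotation speed `w = ω r sinθ` of the
field line through that point. -/
theorem disk_rotation_theorem
    (n t ephi B Bhat v vhat : EuclideanSpace ℝ (Fin 3))
    (χ w vphihat : ℝ)
    (hnorm : ‖ephi‖ = 1)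
    (hperp : ⟪n, ephi⟫_ℝ = 0)
    (ht : t = cross3 n ephi)
    (hv : v = χ • B + w • ephi)
    (hvhat : vhat = vphihat • ephi)
    (hjump : ⟪cross3 v B, t⟫_ℝ = ⟪cross3 vhat Bhat, t⟫_ℝ)
    (hBn : ⟪B, n⟫_ℝ = ⟪Bhat, n⟫_ℝ)
    (hBn0 : ⟪B, n⟫_ℝ ≠ 0) :
    vphihat = w := by
  rw [hv, hvhat, ht, cross3_smul_add_smul_self, cross3_smul_left, real_inner_smul_left,
    real_inner_smul_left, inner_cross3_cross3_of_unit_of_orthogonal hnorm hperp,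
    inner_cross3_cross3_of_unit_of_orthogonal hnorm hperp, ← hBn] at hjump
  exact (mul_right_cancel₀ (neg_ne_zero.mpr hBn0) hjump).symm
end

section
/- (Necessary condition for Keplerian disk formation, Eq. (43).) Let ρ > 0, v_θ > 0, v_φ > 0, 𝒜_m > 0 and 𝒜_φ < 0 be real numbers. Suppose B_φ² = 4πρ v_φ² 𝒜_φ² and B̂_φ = B_φ (1 − 1/(𝒜_m 𝒜_φ)). Then ρ v_θ² + (B_φ² − B̂_φ²)/(8π) > 0 if and only if v_θ/v_φ > √((1 − 2𝒜_m 𝒜_φ)/(2𝒜_m²)). In particular, for a positive post-shock density the normal flow speed into the shock must exceed the stated multiple of the rotational speed. -/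
open Real

/-- Necessary condition for Keplerian disk formation (Eq. (43)): the post-shock disk
density is positive iff the normal flow speed into the shock satisfies
`v_θ/v_φ > √((1 − 2𝒜_m𝒜_φ)/(2𝒜_m²))`. -/
theorem keplerian_disk_formation_condition
    (ρ vθ vφ Am Aphi Bphi Bphihat : ℝ)
    (hρ : 0 < ρ) (hvθ : 0 < vθ) (hvφ : 0 < vφ)
    (hAm : 0 < Am) (hAphi : Aphi < 0)
    (hBphi : Bphi ^ 2 = 4 * π * ρ * vφ ^ 2 * Aphi ^ 2)
    (hBphihat : Bphihat = Bphi * (1 - 1 / (Am * Aphi))) :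
    0 < ρ * vθ ^ 2 + (Bphi ^ 2 - Bphihat ^ 2) / (8 * π) ↔
      vθ / vφ > Real.sqrt ((1 - 2 * Am * Aphi) / (2 * Am ^ 2)) := by
  have hπ : (0:ℝ) < π := Real.pi_pos
  have hAmne : Am ≠ 0 := ne_of_gt hAm
  have hAphine : Aphi ≠ 0 := ne_of_lt hAphi
  have hπne : π ≠ 0 := ne_of_gt hπ
  set k : ℝ := (1 - 2 * Am * Aphi) / (2 * Am ^ 2) with hk
  have key : ρ * vθ ^ 2 + (Bphi ^ 2 - Bphihat ^ 2) / (8 * π)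
      = ρ * (vθ ^ 2 - vφ ^ 2 * k) := by
    rw [hBphihat, mul_pow, hBphi, hk]
    field_simp
    ring
  rw [key]
  have h1 : 0 < ρ * (vθ ^ 2 - vφ ^ 2 * k) ↔ vφ ^ 2 * k < vθ ^ 2 := by
    constructor
    · intro h; nlinarith
    · intro h; nlinarith
  rw [h1]
  have h2 : Real.sqrt k < vθ / vφ ↔ k < (vθ / vφ) ^ 2 :=
    Real.sqrt_lt' (div_pos hvθ hvφ)
  rw [gt_iff_lt, h2, div_pow, lt_div_iff₀ (by positivity), mul_comm]
end

section
/- (Outer radius of the quasi-steady Keplerian disk, Eq. (55).) Let G M (1−Γ) > 0, R > 0, α > 0, x_int > 0 and x_end > 0 be real numbers. Set ω = α √(GM(1−Γ)/R³). Suppose disk material at radius r_int = x_int R with rotational speed ω r_int moves outward conserving specific angular momentum into a circular Keplerian orbit at radius r_end = x_end R, i.e. ω r_int² = √(GM(1−Γ)/r_end) · r_end. Then x_end = α² x_int⁴. In particular, if x_int = 2^{1/3} α^{−2/3} (the escape radius), then x_end = 2^{4/3} α^{−2/3}; hence the maximal quasi-steady Keplerian disk region extends from α^{−2/3} R to 2^{4/3}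 α^{−2/3} R. -/
open Real

/-!
Squaring the angular-momentum balance `α √(K/R³) (x_int R)² = √(K/r_end) r_end = √(K r_end)`,
with `K = GM(1−Γ)`, gives `α² K x_int⁴ R = K x_end R`, so `x_end = α² x_int⁴`; the escape
radius then only requires the exponent arithmetic `2 + 4·(−2/3) = −2/3`.
-/

lemma sqrt_div_mul_self_eq_sqrt_mul (K : ℝ) {r : ℝ} (hr : 0 ≤ r) :
    √(K / r) * r = √(K * r) := by
  rcases hr.eq_or_lt with rfl | hr
  · simp
  · rw [← Real.sqrt_sq hr.le, ← Real.sqrt_mul' _ (sq_nonneg r), Real.sqrt_sq hr.le]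
    field_simp

lemma eq_mul_pow_four_of_angular_momentum_eq {K R α xint xend : ℝ} (hK : 0 < K) (hR : 0 < R)
    (hxend : 0 ≤ xend) (h : α * √(K / R ^ 3) * (xint * R) ^ 2 = √(K * (xend * R))) :
    xend = α ^ 2 * xint ^ 4 := by
  have hsq := congrArg (· ^ 2) h
  simp only [mul_pow, Real.sq_sqrt (div_pos hK (pow_pos hR 3)).le,
    Real.sq_sqrt (mul_nonneg hK.le (mul_nonneg hxend hR.le))] at hsq
  field_simp at hsq
  exact hsq.symm

lemma sq_mul_escape_radius_pow_four {α : ℝ} (hα : 0 < α) :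
    α ^ 2 * ((2 : ℝ) ^ ((1 : ℝ) / 3) * α ^ (-(2 : ℝ) / 3)) ^ 4
      = (2 : ℝ) ^ ((4 : ℝ) / 3) * α ^ (-(2 : ℝ) / 3) := by
  have h2 : ((2 : ℝ) ^ ((1 : ℝ) / 3)) ^ 4 = (2 : ℝ) ^ ((4 : ℝ) / 3) := by
    rw [← Real.rpow_natCast, ← Real.rpow_mul zero_le_two]
    norm_num
  have hα4 : α ^ 2 * (α ^ (-(2 : ℝ) / 3)) ^ 4 = α ^ (-(2 : ℝ) / 3) := by
    rw [← Real.rpow_natCast (α ^ _), ← Real.rpow_mul hα.le, ← Real.rpow_natCast α 2,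
      ← Real.rpow_add hα]
    norm_num
  rw [mul_pow, h2, mul_left_comm, hα4]

theorem outer_radius_of_keplerian_disk_general
    (G M Γ R α xint xend : ℝ)
    (hGM : 0 < G * M * (1 - Γ)) (hR : 0 < R) (hα : 0 < α)
    (hxend : 0 < xend)
    (ω rint rend : ℝ)
    (hω : ω = α * Real.sqrt (G * M * (1 - Γ) / R ^ 3))
    (hrint : rint = xint * R) (hrend : rend = xend * R)
    (hang : ω * rint ^ 2 = Real.sqrt (G * M * (1 - Γ) / rend) * rend) :
    xend = α ^ 2 * xint ^ 4 ∧
      (xint = (2 : ℝ) ^ ((1 : ℝ) / 3) * α ^ (-(2 : ℝ) / 3) →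
        xend = (2 : ℝ) ^ ((4 : ℝ) / 3) * α ^ (-(2 : ℝ) / 3)) := by
  subst hω hrint hrend
  rw [sqrt_div_mul_self_eq_sqrt_mul _ (mul_pos hxend hR).le] at hang
  have hmain := eq_mul_pow_four_of_angular_momentum_eq hGM hR hxend.le hang
  refine ⟨hmain, fun hx => ?_⟩
  rw [hmain, hx, sq_mul_escape_radius_pow_four hα]

/-- Outer radius of the quasi-steady Keplerian disk (Eq. (55)): material at
`r_int = x_int R` rotating rigidly at `ω r_int` moving outward at constant specific
angular momentum into a circular Keplerian orbit at `r_end = x_end R` satisfies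
`x_end = α² x_int⁴`; in particular, starting from the escape radius
`x_int = 2^(1/3) α^(−2/3)` gives `x_end = 2^(4/3) α^(−2/3)`. -/
theorem outer_radius_of_keplerian_disk
    (G M Γ R α xint xend : ℝ)
    (hGM : 0 < G * M * (1 - Γ)) (hR : 0 < R) (hα : 0 < α)
    (hxint : 0 < xint) (hxend : 0 < xend)
    (ω rint rend : ℝ)
    (hω : ω = α * Real.sqrt (G * M * (1 - Γ) / R ^ 3))
    (hrint : rint = xint * R) (hrend : rend = xend * R)
    (hang : ω * rint ^ 2 = Real.sqrt (G * M * (1 - Γ) / rend) * rend) :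
    xend = α ^ 2 * xint ^ 4 ∧
      (xint = (2 : ℝ) ^ ((1 : ℝ) / 3) * α ^ (-(2 : ℝ) / 3) →
        xend = (2 : ℝ) ^ ((4 : ℝ) / 3) * α ^ (-(2 : ℝ) / 3)) :=
  outer_radius_of_keplerian_disk_general G M Γ R α xint xend hGM hR hα hxend ω rint rend hω hrint
    hrend hang
end
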